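/- arXiv:1506.06011 — 10 statements merged into one kernel-verified Lean document; each statement's English description precedes it below -/
import Mathlib

section
/- Let p : ℕ×ℕ → ℝ be nonnegative with p(k,n)=0 whenever k>W, with ∑_{k,n} p(k,n) < ∞, and suppose p satisfies the stationary Kolmogorov equations of the greedy model: for all n≥1 and all 0≤k≤W, p(k,n) = 1_{k<W}·(1−r)·∑_{j=0}^{n} π_σ(j)·p(k+1,n−j) + 1_{k>0}·r·∑_{j=0}^{n} π_T(j)·p(k,n−j) + (1/(W+1))·∑_{j=0}^{n} π_T(j)·p(0,n+1−j) + (1/(W+1))·[(1−r)·π_σ(n) + r·π_T(n)]·p(0,0); together with the boundary conditions p(k,0)=0 for all 1≤k≤W, and exp(−λT)·p(0,1) = p(0,0)·(1 − r·exp(−λT) − (1−r)·exp(−λσ)). Then for every complex x with 0<|x|<1, the generating functions F_k(x) = ∑_{n≥0} p(k,n)·x^n satisfy the linear system: a(x)·F_1(x) = F_0(x) − p(0,0) + C(x); a(x)·F_{k+1}(x) = b(x)·F_k(x) + C(x) for all 1≤k≤W−1; and b(x)·F_W(x) + C(x) = 0, where C(x) = −exp(−λT(1−x))·F_0(x)/((W+1)·x)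 + (p(0,0)/(W+1))·[1 + (1/x − r)·exp(−λT(1−x)) − (1−r)·exp(−λσ(1−x))]. -/
/-!
Multiply the `n`-th Kolmogorov equation by `x ^ n` and sum over `n ≥ 1`. For `‖x‖ ≤ 1` every
series converges absolutely, so by the Cauchy product a Poisson(`c`)-weighted convolution becomes
the product with the Poisson generating function `exp (-c (1 - x))`; the shifted index
`n + 1 - j` turns `F₀` into `(F₀ - p(0,0)) / x`. Subtracting the `n = 0` terms, which the boundary
conditions evaluate, leaves one linear balance equation for each `k ≤ W`, and these are the
three identities.
-/

open Finset

noncomputable def poissonWeight (c : ℝ) (j : ℕ) : ℝ := Real.exp (-c) * c ^ j / j.factorial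

theorem hasSum_poissonWeight_mul_pow (c : ℝ) (x : ℂ) :
    HasSum (fun j => (poissonWeight c j : ℂ) * x ^ j) (Complex.exp (-c * (1 - x))) := by
  have h := (NormedSpace.expSeries_div_hasSum_exp ((c : ℂ) * x)).mul_left (Complex.exp (-c))
  rw [← Complex.exp_eq_exp_ℂ, ← Complex.exp_add, show -(c : ℂ) + c * x = -c * (1 - x) by ring]
    at h
  refine h.congr_fun fun j => ?_
  simp only [poissonWeight]
  push_cast
  ring

theorem summable_norm_poissonWeight_mul_pow (c : ℝ) (x : ℂ) :
    Summable fun j => ‖(poissonWeight c j : ℂ) * x ^ j‖ := by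
  refine ((Real.summable_pow_div_factorial (|c| * ‖x‖)).mul_left (Real.exp (-c))).congr
    fun j => ?_
  simp only [poissonWeight, norm_mul, norm_pow, Complex.norm_real, Real.norm_eq_abs, abs_div,
    abs_mul, abs_pow, Real.abs_exp, Nat.abs_cast, mul_pow]
  ring

noncomputable def genFun (q : ℕ → ℝ) (x : ℂ) : ℂ := ∑' n, (q n : ℂ) * x ^ n

theorem summable_norm_ofReal_mul_pow {q : ℕ → ℝ} (hq : Summable q) {x : ℂ} (hx : ‖x‖ ≤ 1) :
    Summable fun n => ‖(q n : ℂ) * x ^ n‖ := by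
  refine hq.abs.of_nonneg_of_le (fun n => norm_nonneg _) fun n => ?_
  rw [norm_mul, norm_pow, Complex.norm_real, Real.norm_eq_abs]
  exact mul_le_of_le_one_right (abs_nonneg _) (pow_le_one₀ (norm_nonneg x) hx)

theorem hasSum_genFun {q : ℕ → ℝ} (hq : Summable q) {x : ℂ} (hx : ‖x‖ ≤ 1) :
    HasSum (fun n => (q n : ℂ) * x ^ n) (genFun q x) :=
  (summable_norm_ofReal_mul_pow hq hx).of_norm.hasSum

theorem hasSum_sum_range_mul_mul_pow {f g : ℕ → ℝ} {x : ℂ}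
    (hf : Summable fun n => ‖(f n : ℂ) * x ^ n‖) (hg : Summable fun n => ‖(g n : ℂ) * x ^ n‖) :
    HasSum (fun n => ((∑ j ∈ range (n + 1), f j * g (n - j) : ℝ) : ℂ) * x ^ n)
      ((∑' n, (f n : ℂ) * x ^ n) * ∑' n, (g n : ℂ) * x ^ n) := by
  refine (hasSum_sum_range_mul_of_summable_norm hf hg).congr_fun fun n => ?_
  push_cast
  rw [sum_mul]
  refine sum_congr rfl fun j hj => ?_
  rw [mul_mul_mul_comm, ← pow_add, Nat.add_sub_cancel' (mem_range_succ_iff.mp hj)]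

theorem hasSum_poissonWeight_conv_mul_pow (c : ℝ) {q : ℕ → ℝ} (hq : Summable q) {x : ℂ}
    (hx : ‖x‖ ≤ 1) :
    HasSum (fun n => ((∑ j ∈ range (n + 1), poissonWeight c j * q (n - j) : ℝ) : ℂ) * x ^ n)
      (Complex.exp (-c * (1 - x)) * genFun q x) := by
  have h := hasSum_sum_range_mul_mul_pow (summable_norm_poissonWeight_mul_pow c x)
    (summable_norm_ofReal_mul_pow hq hx)
  rwa [(hasSum_poissonWeight_mul_pow c x).tsum_eq] at h

theorem genFun_succ {q : ℕ → ℝ} (hq : Summable q) {x : ℂ} (hx0 : x ≠ 0) (hx1 : ‖x‖ ≤ 1) :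
    genFun (fun n => q (n + 1)) x = (genFun q x - q 0) / x := by
  have h := ((hasSum_nat_add_iff' 1).mpr (hasSum_genFun hq hx1)).div_const x
  simp only [range_one, sum_singleton, pow_zero, mul_one] at h
  refine (h.congr_fun fun n => ?_).tsum_eq
  rw [pow_succ]
  field_simp

theorem HasSum.sub_eq_sub_of_succ {G : Type*} [AddCommGroup G] [TopologicalSpace G]
    [IsTopologicalAddGroup G] [T2Space G] {f g : ℕ → G} {A B : G}
    (hf : HasSum f A) (hg : HasSum g B) (h : ∀ n, f (n + 1) = g (n + 1)) : A - f 0 = B - g 0 := by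
  have hf' := (hasSum_nat_add_iff' 1).mpr hf
  have hg' := (hasSum_nat_add_iff' 1).mpr hg
  simp only [range_one, sum_singleton] at hf' hg'
  exact hf'.unique (by simpa only [h] using hg')

section Greedy

variable (lam σ T r : ℝ) (W : ℕ) (p : ℕ × ℕ → ℝ)

noncomputable def greedyKolmogorovRHS (k n : ℕ) : ℝ :=
  (if k < W then 1 - r else 0)
      * ∑ j ∈ range (n + 1), poissonWeight (lam * σ) j * p (k + 1, n - j)
    + (if 0 < k then r else 0) * ∑ j ∈ range (n + 1), poissonWeight (lam * T) j * p (k, n - j)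
    + 1 / (W + 1) * ∑ j ∈ range (n + 1), poissonWeight (lam * T) j * p (0, n + 1 - j)
    + 1 / (W + 1) * ((1 - r) * poissonWeight (lam * σ) n + r * poissonWeight (lam * T) n)
      * p (0, 0)

variable {lam σ T r W p}

theorem hasSum_greedyKolmogorovRHS_mul_pow (hp : Summable p) {x : ℂ} (hx0 : x ≠ 0)
    (hx1 : ‖x‖ ≤ 1) (k : ℕ) :
    HasSum (fun n => (greedyKolmogorovRHS lam σ T r W p k n : ℂ) * x ^ n)
      (((if k < W then 1 - r else 0 : ℝ) : ℂ)
          * (Complex.exp (-(lam * σ : ℝ) * (1 - x)) * genFun (fun n => p (k + 1, n)) x)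
        + ((if 0 < k then r else 0 : ℝ) : ℂ)
          * (Complex.exp (-(lam * T : ℝ) * (1 - x)) * genFun (fun n => p (k, n)) x)
        + 1 / (W + 1) * (Complex.exp (-(lam * T : ℝ) * (1 - x))
          * ((genFun (fun n => p (0, n)) x - p (0, 0)) / x))
        + 1 / (W + 1) * ((1 - r) * Complex.exp (-(lam * σ : ℝ) * (1 - x))
          + r * Complex.exp (-(lam * T : ℝ) * (1 - x))) * p (0, 0)) := by
  have hrow : ∀ k, Summable fun n => p (k, n) := hp.prod_factor
  have hσ := hasSum_poissonWeight_conv_mul_pow (lam * σ) (hrow (k + 1)) hx1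
  have hT := hasSum_poissonWeight_conv_mul_pow (lam * T) (hrow k) hx1
  have hshift := hasSum_poissonWeight_conv_mul_pow (lam * T)
    ((summable_nat_add_iff 1).mpr (hrow 0)) hx1
  rw [genFun_succ (hrow 0) hx0 hx1] at hshift
  have hshift' : HasSum (fun n => ((∑ j ∈ range (n + 1),
      poissonWeight (lam * T) j * p (0, n + 1 - j) : ℝ) : ℂ) * x ^ n) _ :=
    hshift.congr_fun fun n => by
      congr 2
      refine sum_congr rfl fun j hj => ?_
      rw [Nat.sub_add_comm (mem_range_succ_iff.mp hj)]
  have hpois := ((hasSum_poissonWeight_mul_pow (lam * σ) x).mul_left (1 - r : ℂ)).add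
    ((hasSum_poissonWeight_mul_pow (lam * T) x).mul_left (r : ℂ))
  refine ((((hσ.mul_left _).add (hT.mul_left _)).add (hshift'.mul_left (1 / (W + 1) : ℂ))).add
    ((hpois.mul_left (1 / (W + 1) : ℂ)).mul_right (p (0, 0) : ℂ))).congr_fun fun n => ?_
  simp only [greedyKolmogorovRHS]
  push_cast
  ring

theorem genFun_greedy_balance (hp : Summable p) {x : ℂ} (hx0 : x ≠ 0) (hx1 : ‖x‖ ≤ 1)
    (hKol : ∀ n, 1 ≤ n → ∀ k ≤ W, p (k, n) = greedyKolmogorovRHS lam σ T r W p k n)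
    {k : ℕ} (hk : k ≤ W) :
    genFun (fun n => p (k, n)) x - p (k, 0)
      = ((if k < W then 1 - r else 0 : ℝ) : ℂ)
          * (Complex.exp (-((lam : ℂ) * σ) * (1 - x)) * genFun (fun n => p (k + 1, n)) x
            - Real.exp (-(lam * σ)) * p (k + 1, 0))
        + ((if 0 < k then r else 0 : ℝ) : ℂ)
          * (Complex.exp (-((lam : ℂ) * T) * (1 - x)) * genFun (fun n => p (k, n)) x
            - Real.exp (-(lam * T)) * p (k, 0))
        + 1 / (W + 1) * (Complex.exp (-((lam : ℂ) * T) * (1 - x))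
          * ((genFun (fun n => p (0, n)) x - p (0, 0)) / x) - Real.exp (-(lam * T)) * p (0, 1))
        + 1 / (W + 1) * ((1 - r) * (Complex.exp (-((lam : ℂ) * σ) * (1 - x))
          - Real.exp (-(lam * σ))) + r * (Complex.exp (-((lam : ℂ) * T) * (1 - x))
          - Real.exp (-(lam * T)))) * p (0, 0) := by
  have h := (hasSum_genFun (hp.prod_factor k) hx1).sub_eq_sub_of_succ
    (hasSum_greedyKolmogorovRHS_mul_pow hp hx0 hx1 k)
    fun n => by rw [hKol (n + 1) n.succ_pos k hk]
  rw [pow_zero, mul_one, mul_one] at h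
  rw [h, greedyKolmogorovRHS]
  simp only [poissonWeight, range_one, sum_singleton, pow_zero, Nat.factorial_zero, Nat.cast_one,
    div_one, mul_one, Nat.sub_zero, zero_add]
  push_cast
  ring

end Greedy

theorem greedy_generating_function_system_general
    (lam σ T r : ℝ) (W : ℕ) (hW : 1 ≤ W)
    (p : ℕ × ℕ → ℝ)
    (hsum : Summable p)
    (hKol : ∀ n : ℕ, 1 ≤ n → ∀ k : ℕ, k ≤ W →
      p (k, n)
        = (if k < W then (1 - r) else 0)
            * ∑ j ∈ Finset.range (n + 1),
                Real.exp (-(lam * σ)) * (lam * σ) ^ j / (j.factorial : ℝ) * p (k + 1, n - j)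
          + (if 0 < k then r else 0)
            * ∑ j ∈ Finset.range (n + 1),
                Real.exp (-(lam * T)) * (lam * T) ^ j / (j.factorial : ℝ) * p (k, n - j)
          + (1 / ((W : ℝ) + 1))
            * ∑ j ∈ Finset.range (n + 1),
                Real.exp (-(lam * T)) * (lam * T) ^ j / (j.factorial : ℝ) * p (0, n + 1 - j)
          + (1 / ((W : ℝ) + 1))
            * ((1 - r) * (Real.exp (-(lam * σ)) * (lam * σ) ^ n / (n.factorial : ℝ))
               + r * (Real.exp (-(lam * T)) * (lam * T) ^ n / (n.factorial : ℝ)))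
            * p (0, 0))
    (hbd0 : ∀ k : ℕ, 1 ≤ k → k ≤ W → p (k, 0) = 0)
    (hbd1 : Real.exp (-(lam * T)) * p (0, 1)
      = p (0, 0) * (1 - r * Real.exp (-(lam * T)) - (1 - r) * Real.exp (-(lam * σ))))
    (x : ℂ) (hx0 : 0 < ‖x‖) (hx1 : ‖x‖ < 1)
    (F : ℕ → ℂ) (hF : ∀ k : ℕ, F k = ∑' n : ℕ, (p (k, n) : ℂ) * x ^ n)
    (a b C : ℂ)
    (ha : a = (1 - (r : ℂ)) * Complex.exp (-((lam : ℂ) * σ) * (1 - x)))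
    (hb : b = 1 - (r : ℂ) * Complex.exp (-((lam : ℂ) * T) * (1 - x)))
    (hC : C = -Complex.exp (-((lam : ℂ) * T) * (1 - x)) * F 0 / (((W : ℂ) + 1) * x)
        + ((p (0, 0) : ℂ) / ((W : ℂ) + 1))
          * (1 + (1 / x - (r : ℂ)) * Complex.exp (-((lam : ℂ) * T) * (1 - x))
              - (1 - (r : ℂ)) * Complex.exp (-((lam : ℂ) * σ) * (1 - x)))) :
    a * F 1 = F 0 - (p (0, 0) : ℂ) + C
      ∧ (∀ k : ℕ, 1 ≤ k → k ≤ W - 1 → a * F (k + 1) = b * F k + C)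
      ∧ b * F W + C = 0 := by
  have hG : ∀ k, genFun (fun n => p (k, n)) x = F k := fun k => (hF k).symm
  have balance := fun k (hk : k ≤ W) => by
    simpa only [hG] using genFun_greedy_balance hsum (norm_pos_iff.mp hx0) hx1.le hKol hk
  have hbd1c := congrArg ((↑) : ℝ → ℂ) hbd1
  push_cast at hbd1c
  -- `ring` does not split `((W + 1) * x)⁻¹` into `(W + 1)⁻¹ * x⁻¹` by itself
  rw [div_mul_eq_div_div] at hC
  have hW0 : 0 < W := hW
  subst ha hb hC
  refine ⟨?_, fun k hk1 hkW => ?_, ?_⟩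
  · have h := balance 0 (Nat.zero_le W)
    simp only [if_pos hW0, lt_irrefl, if_false, hbd0 1 le_rfl hW] at h
    push_cast at h
    linear_combination -h + 1 / ((W : ℂ) + 1) * hbd1c
  · have h := balance k (by omega)
    simp only [if_pos (show k < W by omega), if_pos (show 0 < k by omega), hbd0 k hk1 (by omega),
      hbd0 (k + 1) (by omega) (by omega)] at h
    push_cast at h
    linear_combination -h + 1 / ((W : ℂ) + 1) * hbd1c
  · have h := balance W le_rfl
    simp only [lt_irrefl, if_false, if_pos hW0, hbd0 W hW le_rfl] at h
    push_cast at h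
    linear_combination h - 1 / ((W : ℂ) + 1) * hbd1c

/-- The generating functions of a stationary solution of the greedy
model's Kolmogorov equations satisfy the linear system of Lemma 1. -/
theorem greedy_generating_function_system
    (lam σ T r : ℝ) (hlam : 0 < lam) (hσ : 0 < σ) (hT : 0 < T)
    (hr0 : 0 < r) (hr1 : r < 1) (W : ℕ) (hW : 1 ≤ W)
    (p : ℕ × ℕ → ℝ)
    (hpos : ∀ k n : ℕ, 0 ≤ p (k, n))
    (hzero : ∀ k n : ℕ, W < k → p (k, n) = 0)
    (hsum : Summable p)
    (hKol : ∀ n : ℕ, 1 ≤ n → ∀ k : ℕ, k ≤ W →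
      p (k, n)
        = (if k < W then (1 - r) else 0)
            * ∑ j ∈ Finset.range (n + 1),
                Real.exp (-(lam * σ)) * (lam * σ) ^ j / (j.factorial : ℝ) * p (k + 1, n - j)
          + (if 0 < k then r else 0)
            * ∑ j ∈ Finset.range (n + 1),
                Real.exp (-(lam * T)) * (lam * T) ^ j / (j.factorial : ℝ) * p (k, n - j)
          + (1 / ((W : ℝ) + 1))
            * ∑ j ∈ Finset.range (n + 1),
                Real.exp (-(lam * T)) * (lam * T) ^ j / (j.factorial : ℝ) * p (0, n + 1 - j)
          + (1 / ((W : ℝ) + 1))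
            * ((1 - r) * (Real.exp (-(lam * σ)) * (lam * σ) ^ n / (n.factorial : ℝ))
               + r * (Real.exp (-(lam * T)) * (lam * T) ^ n / (n.factorial : ℝ)))
            * p (0, 0))
    (hbd0 : ∀ k : ℕ, 1 ≤ k → k ≤ W → p (k, 0) = 0)
    (hbd1 : Real.exp (-(lam * T)) * p (0, 1)
      = p (0, 0) * (1 - r * Real.exp (-(lam * T)) - (1 - r) * Real.exp (-(lam * σ))))
    (x : ℂ) (hx0 : 0 < ‖x‖) (hx1 : ‖x‖ < 1)
    (F : ℕ → ℂ) (hF : ∀ k : ℕ, F k = ∑' n : ℕ, (p (k, n) : ℂ) * x ^ n)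
    (a b C : ℂ)
    (ha : a = (1 - (r : ℂ)) * Complex.exp (-((lam : ℂ) * σ) * (1 - x)))
    (hb : b = 1 - (r : ℂ) * Complex.exp (-((lam : ℂ) * T) * (1 - x)))
    (hC : C = -Complex.exp (-((lam : ℂ) * T) * (1 - x)) * F 0 / (((W : ℂ) + 1) * x)
        + ((p (0, 0) : ℂ) / ((W : ℂ) + 1))
          * (1 + (1 / x - (r : ℂ)) * Complex.exp (-((lam : ℂ) * T) * (1 - x))
              - (1 - (r : ℂ)) * Complex.exp (-((lam : ℂ) * σ) * (1 - x)))) :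
    a * F 1 = F 0 - (p (0, 0) : ℂ) + C
      ∧ (∀ k : ℕ, 1 ≤ k → k ≤ W - 1 → a * F (k + 1) = b * F k + C)
      ∧ b * F W + C = 0 :=
  greedy_generating_function_system_general lam σ T r W hW p hsum hKol hbd0 hbd1 x hx0 hx1 F hF a b
    C ha hb hC
end

section
/- Let x be a complex number with x≠0, a(x)≠0 and S(x)≠0, let p₀₀ be a complex number, and let F_0, F_1, …, F_W be complex numbers satisfying the linear system: a(x)·F_1 = F_0 − p₀₀ + C; a(x)·F_{k+1} = b(x)·F_k + C for all 1≤k≤W−1; and b(x)·F_W + C = 0, where C = −exp(−λT(1−x))·F_0/((W+1)·x) + (p₀₀/(W+1))·[1 + (1/x − r)·exp(−λT(1−x)) − (1−r)·exp(−λσ(1−x))]. Then for every 1≤k≤W, F_k = ((F_0 − p₀₀)/a(x)) · (∑_{i=k−1}^{W−1} u(x)^i)/S(x), and moreover R(x)·F_0 = p₀₀·Q(x). -/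
/-!
Writing `G k = a F_{k+1}` and `b = a u`, the system is the affine recurrence
`G (k+1) = u G k + C` started at `G 0 = (F₀ - p₀₀) + C`, so
`G k = (F₀ - p₀₀) uᵏ + C (1 + u + ⋯ + uᵏ)`. The terminal equation `u G (W-1) + C = 0` then reads
`(F₀ - p₀₀) u^W + C S = 0`, which determines `C`; substituting it back gives the closed form, and
comparing it with the definition of `C` gives `R F₀ = p₀₀ Q`.
-/

open Finset

section GeomSum

variable {R : Type*}

theorem pow_mul_geom_sum_eq_sum_Ico [Semiring R] (u : R) (m k : ℕ) :
    u ^ m * ∑ i ∈ range k, u ^ i = ∑ i ∈ Ico m (m + k), u ^ i := by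
  rw [sum_Ico_eq_sum_range, Nat.add_sub_cancel_left, mul_sum]
  simp_rw [pow_add]

theorem pow_mul_geom_sum_sub_pow_mul_geom_sum [Ring R] (u : R) {j n : ℕ} (h : j ≤ n) :
    u ^ j * ∑ i ∈ range (n + 1), u ^ i - u ^ n * ∑ i ∈ range (j + 1), u ^ i
      = ∑ i ∈ Ico j n, u ^ i := by
  rw [pow_mul_geom_sum_eq_sum_Ico, pow_mul_geom_sum_eq_sum_Ico, sub_eq_iff_eq_add,
    show j + (n + 1) = n + (j + 1) by omega, sum_Ico_consecutive _ h (by omega)]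

end GeomSum

section AffineRecurrence

variable {R : Type*} [CommRing R] {u c d : R} {g : ℕ → R} {n : ℕ}

theorem eq_of_affine_recurrence (h0 : g 0 = d + c)
    (hs : ∀ k, k + 1 < n → g (k + 1) = u * g k + c) :
    ∀ k < n, g k = d * u ^ k + c * ∑ i ∈ range (k + 1), u ^ i := by
  intro k hk
  induction k with
  | zero => simp [h0]
  | succ k ih =>
    rw [hs k hk, ih (by omega), geom_sum_succ (n := k + 1)]
    ring

theorem affine_recurrence_terminal (h0 : g 0 = d + c)
    (hs : ∀ k, k + 1 < n → g (k + 1) = u * g k + c) (hn : 0 < n)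
    (hend : u * g (n - 1) + c = 0) :
    d * u ^ n + c * ∑ i ∈ range (n + 1), u ^ i = 0 := by
  obtain ⟨m, rfl⟩ : ∃ m, n = m + 1 := ⟨n - 1, by omega⟩
  rw [Nat.add_sub_cancel, eq_of_affine_recurrence h0 hs m (by omega)] at hend
  rw [geom_sum_succ (n := m + 1)]
  linear_combination hend

theorem mul_geom_sum_eq_of_affine_recurrence (h0 : g 0 = d + c)
    (hs : ∀ k, k + 1 < n → g (k + 1) = u * g k + c) (hn : 0 < n)
    (hend : u * g (n - 1) + c = 0) :
    ∀ k < n, g k * ∑ i ∈ range (n + 1), u ^ i = d * ∑ i ∈ Ico k n, u ^ i := by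
  intro k hk
  rw [eq_of_affine_recurrence h0 hs k hk, ← pow_mul_geom_sum_sub_pow_mul_geom_sum u hk.le]
  linear_combination (∑ i ∈ range (k + 1), u ^ i) * affine_recurrence_terminal h0 hs hn hend

end AffineRecurrence

theorem greedy_formal_solution_general
    (lam σ T r : ℝ) (W : ℕ) (hW : 1 ≤ W)
    (x : ℂ)
    (a b u S f R Q : ℂ)
    (hu : u = b / a)
    (hS : S = ∑ i ∈ Finset.range (W + 1), u ^ i)
    (hf : f = ((W : ℂ) + 1) * u ^ W / S)
    (hR : R = Complex.exp (-((lam : ℂ) * T) * (1 - x)) / x - f)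
    (hQ : Q = 1 + (1 / x - (r : ℂ)) * Complex.exp (-((lam : ℂ) * T) * (1 - x))
        - (1 - (r : ℂ)) * Complex.exp (-((lam : ℂ) * σ) * (1 - x)) - f)
    (ha0 : a ≠ 0) (hS0 : S ≠ 0)
    (p00 : ℂ) (F : ℕ → ℂ) (C : ℂ)
    (hC : C = -Complex.exp (-((lam : ℂ) * T) * (1 - x)) * F 0 / (((W : ℂ) + 1) * x)
        + (p00 / ((W : ℂ) + 1))
          * (1 + (1 / x - (r : ℂ)) * Complex.exp (-((lam : ℂ) * T) * (1 - x))
              - (1 - (r : ℂ)) * Complex.exp (-((lam : ℂ) * σ) * (1 - x))))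
    (h1 : a * F 1 = F 0 - p00 + C)
    (h2 : ∀ k : ℕ, 1 ≤ k → k ≤ W - 1 → a * F (k + 1) = b * F k + C)
    (h3 : b * F W + C = 0) :
    (∀ k : ℕ, 1 ≤ k → k ≤ W →
        F k = ((F 0 - p00) / a) * (∑ i ∈ Finset.Ico (k - 1) W, u ^ i) / S)
      ∧ R * F 0 = p00 * Q := by
  have hb : b = u * a := by rw [hu, div_mul_cancel₀ _ ha0]
  have hs : ∀ k, k + 1 < W → a * F (k + 1 + 1) = u * (a * F (k + 1)) + C := fun k hk => by
    rw [h2 (k + 1) (by omega) (by omega), hb]; ring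
  have hend : u * (a * F (W - 1 + 1)) + C = 0 := by
    rw [Nat.sub_add_cancel hW, ← h3, hb]; ring
  refine ⟨fun k hk1 hkW => ?_, ?_⟩
  · obtain ⟨j, rfl⟩ : ∃ j, k = j + 1 := ⟨k - 1, by omega⟩
    have hG := mul_geom_sum_eq_of_affine_recurrence (g := fun j => a * F (j + 1)) h1 hs hW hend
      j (by omega)
    rw [← hS] at hG
    rw [Nat.add_sub_cancel]
    field_simp
    linear_combination hG
  · have hterm := affine_recurrence_terminal (g := fun j => a * F (j + 1)) h1 hs hW hend
    rw [← hS] at hterm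
    have hfS : f * S = ((W : ℂ) + 1) * u ^ W := by rw [hf]; field_simp
    have hCf : ((W : ℂ) + 1) * C = -(F 0 - p00) * f := mul_right_cancel₀ hS0 <| by
      linear_combination ((W : ℂ) + 1) * hterm + (F 0 - p00) * hfS
    have hW1 : ((W : ℂ) + 1) ≠ 0 := Nat.cast_add_one_ne_zero W
    rw [hC, mul_add, ← mul_div_assoc, mul_div_mul_left _ _ hW1, ← mul_assoc,
      mul_div_cancel₀ _ hW1] at hCf
    rw [hR, hQ]
    linear_combination -hCf

/-- Formal solution of the linear system for the greedy model:
the generating functions are expressed in terms of `F 0`, and `F 0` satisfies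
`R·F₀ = p₀₀·Q`. -/
theorem greedy_formal_solution
    (lam σ T r : ℝ) (hlam : 0 < lam) (hσ : 0 < σ) (hT : 0 < T)
    (hr0 : 0 < r) (hr1 : r < 1) (W : ℕ) (hW : 1 ≤ W)
    (x : ℂ) (hx : x ≠ 0)
    (a b u S f R Q : ℂ)
    (ha : a = (1 - (r : ℂ)) * Complex.exp (-((lam : ℂ) * σ) * (1 - x)))
    (hb : b = 1 - (r : ℂ) * Complex.exp (-((lam : ℂ) * T) * (1 - x)))
    (hu : u = b / a)
    (hS : S = ∑ i ∈ Finset.range (W + 1), u ^ i)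
    (hf : f = ((W : ℂ) + 1) * u ^ W / S)
    (hR : R = Complex.exp (-((lam : ℂ) * T) * (1 - x)) / x - f)
    (hQ : Q = 1 + (1 / x - (r : ℂ)) * Complex.exp (-((lam : ℂ) * T) * (1 - x))
        - (1 - (r : ℂ)) * Complex.exp (-((lam : ℂ) * σ) * (1 - x)) - f)
    (ha0 : a ≠ 0) (hS0 : S ≠ 0)
    (p00 : ℂ) (F : ℕ → ℂ) (C : ℂ)
    (hC : C = -Complex.exp (-((lam : ℂ) * T) * (1 - x)) * F 0 / (((W : ℂ) + 1) * x)
        + (p00 / ((W : ℂ) + 1))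
          * (1 + (1 / x - (r : ℂ)) * Complex.exp (-((lam : ℂ) * T) * (1 - x))
              - (1 - (r : ℂ)) * Complex.exp (-((lam : ℂ) * σ) * (1 - x))))
    (h1 : a * F 1 = F 0 - p00 + C)
    (h2 : ∀ k : ℕ, 1 ≤ k → k ≤ W - 1 → a * F (k + 1) = b * F k + C)
    (h3 : b * F W + C = 0) :
    (∀ k : ℕ, 1 ≤ k → k ≤ W →
        F k = ((F 0 - p00) / a) * (∑ i ∈ Finset.Ico (k - 1) W, u ^ i) / S)
      ∧ R * F 0 = p00 * Q :=
  greedy_formal_solution_general lam σ T r W hW x a b u S f R Q hu hS hf hR hQ ha0 hS0 p00 F C hC h1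
    h2 h3
end

section
/- The functions R and Q vanish at x=1 and are differentiable at x=1, with derivatives R'(1) = −1 + λT + λW·(rT+(1−r)σ)/(2(1−r)) and Q'(1) = −1 + (1−r)·λ·(T−σ) + λW·(rT+(1−r)σ)/(2(1−r)). Equivalently, R'(1) = λB − 1 where B = T + W·(rT+(1−r)σ)/(2(1−r)). -/
/-!
Everything is smooth near `x = 1`, where both exponentials equal `1`, so `u 1 = 1`. The only
non-routine piece is `f = g ∘ u` with `g y = (W + 1) y^W / ∑_{i ≤ W} y^i`: by the quotient rule and
Gauss's sum `∑_{i ≤ W} i = W (W + 1) / 2`, `g' 1 = W / 2`, and the chain rule gives `f' 1`.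
-/

open Finset

theorem hasDerivAt_exp_neg_mul_one_sub (c x : ℝ) :
    HasDerivAt (fun y : ℝ => Real.exp (-c * (1 - y))) (c * Real.exp (-c * (1 - x))) x := by
  simpa [mul_comm] using (((hasDerivAt_id x).const_sub 1).const_mul (-c)).exp

theorem hasDerivAt_geom_sum_one (n : ℕ) :
    HasDerivAt (fun y : ℝ => ∑ i ∈ range (n + 1), y ^ i) (n * (n + 1) / 2) 1 := by
  have gauss : ∑ i ∈ range (n + 1), (i : ℝ) = n * (n + 1) / 2 := by
    have h := congrArg (Nat.cast : ℕ → ℝ) (sum_range_id_mul_two (n + 1))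
    push_cast at h
    linarith
  simpa [gauss] using HasDerivAt.fun_sum fun i (_ : i ∈ range (n + 1)) => hasDerivAt_pow i (1 : ℝ)

theorem hasDerivAt_mul_pow_div_geom_sum_one (n : ℕ) :
    HasDerivAt (fun y : ℝ => ((n : ℝ) + 1) * y ^ n / ∑ i ∈ range (n + 1), y ^ i) (n / 2) 1 := by
  have hn : (n : ℝ) + 1 ≠ 0 := by positivity
  refine (((hasDerivAt_pow n (1 : ℝ)).const_mul ((n : ℝ) + 1)).fun_div
    (hasDerivAt_geom_sum_one n) (by simpa using hn)).congr_deriv ?_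
  simp only [one_pow, mul_one, sum_const, card_range, nsmul_eq_mul]
  push_cast
  field_simp
  ring

theorem hasDerivAt_one_sub_mul_exp_div_mul_exp_one {r : ℝ} (hr : r ≠ 1) (a c : ℝ) :
    HasDerivAt (fun x : ℝ => (1 - r * Real.exp (-a * (1 - x))) / ((1 - r) * Real.exp (-c * (1 - x))))
      (-(r * a + (1 - r) * c) / (1 - r)) 1 := by
  have hr' : 1 - r ≠ 0 := sub_ne_zero.2 hr.symm
  refine ((((hasDerivAt_exp_neg_mul_one_sub a 1).const_mul r).const_sub 1).fun_div
    ((hasDerivAt_exp_neg_mul_one_sub c 1).const_mul (1 - r)) (by simpa using hr')).congr_deriv ?_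
  simp only [sub_self, mul_zero, Real.exp_zero, mul_one]
  field_simp
  ring

theorem greedy_R_Q_derivatives_at_one_general
    (lam σ T r : ℝ) (hr1 : r < 1) (W : ℕ)
    (u S f R Q : ℝ → ℝ)
    (hu : ∀ x : ℝ, u x
      = (1 - r * Real.exp (-(lam * T) * (1 - x))) / ((1 - r) * Real.exp (-(lam * σ) * (1 - x))))
    (hS : ∀ x : ℝ, S x = ∑ i ∈ Finset.range (W + 1), u x ^ i)
    (hf : ∀ x : ℝ, f x = ((W : ℝ) + 1) * u x ^ W / S x)
    (hR : ∀ x : ℝ, R x = Real.exp (-(lam * T) * (1 - x)) / x - f x)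
    (hQ : ∀ x : ℝ, Q x = 1 + (1 / x - r) * Real.exp (-(lam * T) * (1 - x))
        - (1 - r) * Real.exp (-(lam * σ) * (1 - x)) - f x)
    (B : ℝ) (hB : B = T + W * (r * T + (1 - r) * σ) / (2 * (1 - r))) :
    R 1 = 0 ∧ Q 1 = 0
      ∧ HasDerivAt R (-1 + lam * T + lam * W * (r * T + (1 - r) * σ) / (2 * (1 - r))) 1
      ∧ HasDerivAt Q
          (-1 + (1 - r) * lam * (T - σ) + lam * W * (r * T + (1 - r) * σ) / (2 * (1 - r))) 1
      ∧ -1 + lam * T + lam * W * (r * T + (1 - r) * σ) / (2 * (1 - r)) = lam * B - 1 := by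
  have hr : 1 - r ≠ 0 := sub_ne_zero.2 hr1.ne'
  have hu1 : u 1 = 1 := by simp [hu, hr]
  have hf1 : f 1 = 1 := by simp [hf, hS, hu1, Nat.cast_add_one_ne_zero]
  have hu' := funext hu ▸ hasDerivAt_one_sub_mul_exp_div_mul_exp_one hr1.ne (lam * T) (lam * σ)
  have hf' : HasDerivAt f (W / 2 * (-(r * (lam * T) + (1 - r) * (lam * σ)) / (1 - r))) 1 := by
    rw [funext hf, funext hS]
    exact (hasDerivAt_mul_pow_div_geom_sum_one W).comp_of_eq 1 hu' hu1.symm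
  have hET := hasDerivAt_exp_neg_mul_one_sub (lam * T) 1
  have hEσ := hasDerivAt_exp_neg_mul_one_sub (lam * σ) 1
  refine ⟨by simp [hR, hf1], by simp [hQ, hf1], ?_, ?_, by rw [hB]; field_simp; ring⟩
  · rw [funext hR]
    refine ((hET.fun_div (hasDerivAt_id' 1) one_ne_zero).sub hf').congr_deriv ?_
    simp only [sub_self, mul_zero, Real.exp_zero]
    field_simp
    ring
  · rw [funext hQ]
    have hinv := (hasDerivAt_const (1 : ℝ) (1 : ℝ)).fun_div (hasDerivAt_id' 1) one_ne_zero
    refine ((((hinv.sub_const r).fun_mul hET).const_add 1).fun_sub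
      (hEσ.const_mul (1 - r))).fun_sub hf' |>.congr_deriv ?_
    simp only [sub_self, mul_zero, Real.exp_zero]
    field_simp
    ring

/-- `R` and `Q` vanish at `x = 1` and are differentiable there, with
`R'(1) = -1 + λT + λW(rT+(1-r)σ)/(2(1-r))` and
`Q'(1) = -1 + (1-r)λ(T-σ) + λW(rT+(1-r)σ)/(2(1-r))`; equivalently `R'(1) = λB - 1`. -/
theorem greedy_R_Q_derivatives_at_one
    (lam σ T r : ℝ) (hlam : 0 < lam) (hσ : 0 < σ) (hT : 0 < T)
    (hr0 : 0 < r) (hr1 : r < 1) (W : ℕ) (hW : 1 ≤ W)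
    (u S f R Q : ℝ → ℝ)
    (hu : ∀ x : ℝ, u x
      = (1 - r * Real.exp (-(lam * T) * (1 - x))) / ((1 - r) * Real.exp (-(lam * σ) * (1 - x))))
    (hS : ∀ x : ℝ, S x = ∑ i ∈ Finset.range (W + 1), u x ^ i)
    (hf : ∀ x : ℝ, f x = ((W : ℝ) + 1) * u x ^ W / S x)
    (hR : ∀ x : ℝ, R x = Real.exp (-(lam * T) * (1 - x)) / x - f x)
    (hQ : ∀ x : ℝ, Q x = 1 + (1 / x - r) * Real.exp (-(lam * T) * (1 - x))
        - (1 - r) * Real.exp (-(lam * σ) * (1 - x)) - f x)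
    (B : ℝ) (hB : B = T + W * (r * T + (1 - r) * σ) / (2 * (1 - r))) :
    R 1 = 0 ∧ Q 1 = 0
      ∧ HasDerivAt R (-1 + lam * T + lam * W * (r * T + (1 - r) * σ) / (2 * (1 - r))) 1
      ∧ HasDerivAt Q
          (-1 + (1 - r) * lam * (T - σ) + lam * W * (r * T + (1 - r) * σ) / (2 * (1 - r))) 1
      ∧ -1 + lam * T + lam * W * (r * T + (1 - r) * σ) / (2 * (1 - r)) = lam * B - 1 :=
  greedy_R_Q_derivatives_at_one_general lam σ T r hr1 W u S f R Q hu hS hf hR hQ B hB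
end

section
/- For every complex x with |x| ≤ 1, one has |u(x)| ≥ 1, where u(x) = exp(λσ(1−x))·(1 − r·exp(−λT(1−x)))/(1−r). -/
/-! On the closed unit disk `Re (1 - x) ≥ 0`, so the factor `exp (λσ(1 - x))` has modulus at least
`1` while `exp (-λT(1 - x))` has modulus at most `1`; hence `|1 - r·exp (-λT(1 - x))| ≥ 1 - r`,
which cancels the denominator. -/

open Complex

lemma re_one_sub_nonneg_of_norm_le_one {x : ℂ} (hx : ‖x‖ ≤ 1) : 0 ≤ (1 - x).re := by
  simpa [sub_re] using (re_le_norm x).trans hx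

lemma one_le_norm_exp_ofReal_mul {c : ℝ} (hc : 0 ≤ c) {z : ℂ} (hz : 0 ≤ z.re) :
    1 ≤ ‖exp (c * z)‖ := by
  rw [norm_exp, re_ofReal_mul]
  exact Real.one_le_exp (mul_nonneg hc hz)

lemma norm_exp_neg_ofReal_mul_le_one {c : ℝ} (hc : 0 ≤ c) {z : ℂ} (hz : 0 ≤ z.re) :
    ‖exp (-c * z)‖ ≤ 1 := by
  rw [norm_exp, ← ofReal_neg, re_ofReal_mul, Real.exp_le_one_iff, neg_mul, neg_nonpos]
  exact mul_nonneg hc hz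

lemma sub_le_norm_one_sub_ofReal_mul {r : ℝ} (hr : 0 ≤ r) {w : ℂ} (hw : ‖w‖ ≤ 1) :
    1 - r ≤ ‖1 - r * w‖ :=
  calc 1 - r ≤ ‖(1 : ℂ)‖ - ‖(r : ℂ) * w‖ := by
        rw [norm_one, norm_mul, norm_real, Real.norm_of_nonneg hr]
        nlinarith
    _ ≤ ‖1 - r * w‖ := norm_sub_norm_le _ _

lemma one_le_norm_mul_div {𝕜 : Type*} [NormedDivisionRing 𝕜] {a b c : 𝕜} (ha : 1 ≤ ‖a‖)
    (hcb : ‖c‖ ≤ ‖b‖) (hc : c ≠ 0) : 1 ≤ ‖a * b / c‖ := by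
  rw [norm_div, norm_mul, le_div_iff₀ (norm_pos_iff.mpr hc), one_mul]
  exact hcb.trans (le_mul_of_one_le_left (norm_nonneg b) ha)

/-- For `|x| ≤ 1`, the modulus of
`u(x) = exp(λσ(1-x))·(1 - r·exp(-λT(1-x)))/(1-r)` is at least `1`. -/
theorem abs_u_ge_one_on_unit_disk
    (lam σ T r : ℝ) (hlam : 0 < lam) (hσ : 0 < σ) (hT : 0 < T)
    (hr0 : 0 ≤ r) (hr1 : r < 1)
    (x : ℂ) (hx : ‖x‖ ≤ 1) :
    1 ≤ ‖
      (Complex.exp ((lam : ℂ) * σ * (1 - x))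
        * (1 - (r : ℂ) * Complex.exp (-((lam : ℂ) * T) * (1 - x))) / (1 - (r : ℂ)))‖ := by
  have hre := re_one_sub_nonneg_of_norm_le_one hx
  have hdenom : ‖1 - (r : ℂ)‖ = 1 - r := by
    rw [← ofReal_one, ← ofReal_sub, norm_real, Real.norm_of_nonneg (by linarith)]
  apply one_le_norm_mul_div
  · exact_mod_cast one_le_norm_exp_ofReal_mul (mul_nonneg hlam.le hσ.le) hre
  · rw [hdenom]
    exact sub_le_norm_one_sub_ofReal_mul hr0
      (by exact_mod_cast norm_exp_neg_ofReal_mul_le_one (mul_nonneg hlam.le hT.le) hre)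
  · exact sub_ne_zero.mpr (by exact_mod_cast hr1.ne')
end

section
/- Assume λB > 1, where B = T + W·(rT+(1−r)σ)/(2(1−r)). Then there exists a complex number x with |x| < 1 and x ≠ 1 such that exp(−λT(1−x))·∑_{i=0}^{W} u(x)^i = (W+1)·x·u(x)^W; in other words, g−h has a zero in the open unit disk different from 1. -/
/-!
On the real segment `[0, 1]`, `g - h` restricts to a real function `f` with `f 0 > 0` (as `h 0 = 0`)
and `f 1 = 0` (as `u 1 = 1`). Since `u'(1) = -λ(rT + (1 - r)σ)/(1 - r)`, differentiating at `1` gives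
`f'(1) = (W + 1)(λB - 1) > 0`, so `f < 0` just to the left of `1`, and the intermediate value theorem
produces a zero of `f` in `(0, 1)`.
-/

open Filter Set Topology

lemma exists_mem_Ioo_eq_zero_of_hasDerivAt_pos {f : ℝ → ℝ} {a b f' : ℝ} (hab : a < b)
    (hf : ContinuousOn f (Icc a b)) (ha : 0 < f a) (hb : f b = 0) (hderiv : HasDerivAt f f' b)
    (hf' : 0 < f') : ∃ c ∈ Ioo a b, f c = 0 := by
  have hneg : ∀ᶠ y in 𝓝[<] b, f y < 0 := by
    have hslope := (hasDerivAt_iff_tendsto_slope.mp hderiv).eventually (eventually_gt_nhds hf')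
    filter_upwards [hslope.filter_mono (nhdsLT_le_nhdsNE b), self_mem_nhdsWithin] with y hy hyb
    exact neg_of_slope_pos hyb hy hb
  obtain ⟨x₀, hfx₀, hx₀⟩ := (hneg.and (Ioo_mem_nhdsLT hab)).exists
  obtain ⟨c, hc, hfc⟩ := intermediate_value_Icc' hx₀.1.le
    (hf.mono (Icc_subset_Icc_right hx₀.2.le)) ⟨hfx₀.le, ha.le⟩
  refine ⟨c, ⟨hc.1.lt_of_ne ?_, hc.2.trans_lt hx₀.2⟩, hfc⟩
  rintro rfl
  exact ha.ne' hfc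

lemma hasDerivAt_exp_neg_mul_one_sub_one (c : ℝ) :
    HasDerivAt (fun x : ℝ => Real.exp (-c * (1 - x))) c 1 := by
  simpa using (((hasDerivAt_id (1 : ℝ)).const_sub 1).const_mul (-c)).exp

lemma mul_exp_neg_lt_one {r c : ℝ} (hr : r < 1) (hc : 0 ≤ c) : r * Real.exp (-c) < 1 := by
  have h₀ := Real.exp_pos (-c)
  have h₁ : Real.exp (-c) ≤ 1 := Real.exp_le_one_iff.mpr (neg_nonpos.mpr hc)
  rcases le_or_gt r 0 with hr₀ | hr₀ <;> nlinarith

lemma cast_sum_range_succ_id_mul_two (W : ℕ) :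
    (∑ i ∈ Finset.range (W + 1), (i : ℝ)) * 2 = W * (W + 1) := by
  have h := congrArg (Nat.cast : ℕ → ℝ) (Finset.sum_range_id_mul_two (W + 1))
  push_cast at h
  simpa [mul_comm] using h

section RealRestriction

variable (lam σ T r : ℝ) (W : ℕ)

noncomputable def uReal (x : ℝ) : ℝ :=
  (1 - r * Real.exp (-(lam * T) * (1 - x))) / ((1 - r) * Real.exp (-(lam * σ) * (1 - x)))

noncomputable def gSubHReal (x : ℝ) : ℝ :=
  Real.exp (-(lam * T) * (1 - x)) * ∑ i ∈ Finset.range (W + 1), uReal lam σ T r x ^ i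
    - ((W : ℝ) + 1) * x * uReal lam σ T r x ^ W

lemma ofReal_uReal (x : ℝ) :
    (uReal lam σ T r x : ℂ) = (1 - (r : ℂ) * Complex.exp (-((lam : ℂ) * T) * (1 - x))) /
      ((1 - (r : ℂ)) * Complex.exp (-((lam : ℂ) * σ) * (1 - x))) := by
  push_cast [uReal]
  rfl

variable {r}

lemma continuous_uReal (hr : r ≠ 1) : Continuous (uReal lam σ T r) :=
  Continuous.div (by fun_prop) (by fun_prop)
    fun _ => mul_ne_zero (sub_ne_zero.mpr hr.symm) (Real.exp_pos _).ne'

lemma continuous_gSubHReal (hr : r ≠ 1) : Continuous (gSubHReal lam σ T r W) := by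
  have := continuous_uReal lam σ T hr
  unfold gSubHReal
  fun_prop

lemma uReal_one (hr : r ≠ 1) : uReal lam σ T r 1 = 1 := by
  simp [uReal, sub_ne_zero.mpr hr.symm]

lemma gSubHReal_one (hr : r ≠ 1) : gSubHReal lam σ T r W 1 = 0 := by
  simp [gSubHReal, uReal_one lam σ T hr]

lemma gSubHReal_zero_pos (hlamT : 0 ≤ lam * T) (hr : r < 1) : 0 < gSubHReal lam σ T r W 0 := by
  have hu : 0 < uReal lam σ T r 0 := by
    refine div_pos ?_ (mul_pos (sub_pos.mpr hr) (Real.exp_pos _))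
    simpa [← neg_mul] using mul_exp_neg_lt_one hr hlamT
  simpa [gSubHReal] using mul_pos (Real.exp_pos _)
    (Finset.sum_pos (fun i _ => pow_pos hu i) (Finset.nonempty_range_add_one))

lemma hasDerivAt_uReal_one (hr : r ≠ 1) :
    HasDerivAt (uReal lam σ T r) (-(lam * (r * T + (1 - r) * σ)) / (1 - r)) 1 := by
  have hr' : 1 - r ≠ 0 := sub_ne_zero.mpr hr.symm
  have hnum := ((hasDerivAt_exp_neg_mul_one_sub_one (lam * T)).const_mul r).const_sub 1
  have hden := (hasDerivAt_exp_neg_mul_one_sub_one (lam * σ)).const_mul (1 - r)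
  refine (hnum.div hden (by simpa using hr')).congr_deriv ?_
  field_simp
  simp
  ring

lemma hasDerivAt_gSubHReal_one (hr : r ≠ 1) :
    HasDerivAt (gSubHReal lam σ T r W)
      ((W + 1) * (lam * (T + W * (r * T + (1 - r) * σ) / (2 * (1 - r))) - 1)) 1 := by
  have hu := hasDerivAt_uReal_one lam σ T hr
  have hsum := HasDerivAt.fun_sum (u := Finset.range (W + 1)) (fun i _ => hu.pow i)
  have hg := (hasDerivAt_exp_neg_mul_one_sub_one (lam * T)).mul hsum
  have hh := (((hasDerivAt_id (1 : ℝ)).const_mul ((W : ℝ) + 1)).mul (hu.pow W))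
  refine (hg.sub hh).congr_deriv ?_
  have hid := cast_sum_range_succ_id_mul_two W
  have hr' : 1 - r ≠ 0 := sub_ne_zero.mpr hr.symm
  simp only [Pi.pow_apply, id, uReal_one lam σ T hr, one_pow, mul_one, sub_self, mul_zero,
    Real.exp_zero, one_mul, Finset.sum_const, Finset.card_range, nsmul_eq_mul, ← Finset.sum_mul]
  field_simp
  push_cast
  linear_combination (-lam * (T * r + (1 - r) * σ)) * hid

end RealRestriction

theorem greedy_zero_in_disk_when_unstable_general
    (lam σ T r : ℝ) (hlam : 0 < lam) (hT : 0 < T)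
    (hr1 : r < 1) (W : ℕ)
    (B : ℝ) (hB : B = T + W * (r * T + (1 - r) * σ) / (2 * (1 - r)))
    (hunst : 1 < lam * B)
    (a b : ℂ → ℂ) (u : ℂ → ℂ)
    (ha : ∀ x : ℂ, a x = (1 - (r : ℂ)) * Complex.exp (-((lam : ℂ) * σ) * (1 - x)))
    (hb : ∀ x : ℂ, b x = 1 - (r : ℂ) * Complex.exp (-((lam : ℂ) * T) * (1 - x)))
    (hu : ∀ x : ℂ, u x = b x / a x) :
    ∃ x : ℂ, ‖x‖ < 1 ∧ x ≠ 1
      ∧ Complex.exp (-((lam : ℂ) * T) * (1 - x)) * ∑ i ∈ Finset.range (W + 1), u x ^ i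
          = ((W : ℂ) + 1) * x * u x ^ W := by
  obtain ⟨c, hc, hfc⟩ := exists_mem_Ioo_eq_zero_of_hasDerivAt_pos zero_lt_one
    (continuous_gSubHReal lam σ T W hr1.ne).continuousOn
    (gSubHReal_zero_pos lam σ T W (mul_pos hlam hT).le hr1) (gSubHReal_one lam σ T W hr1.ne)
    (hasDerivAt_gSubHReal_one lam σ T W hr1.ne)
    (mul_pos (by positivity) (by rwa [← hB, sub_pos]))
  have huc : u c = uReal lam σ T r c := by rw [hu, ha, hb, ofReal_uReal]
  refine ⟨c, by simpa [abs_of_pos hc.1] using hc.2, by exact_mod_cast hc.2.ne, ?_⟩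
  rw [huc]
  exact_mod_cast sub_eq_zero.mp hfc

/-- When `λB > 1`, the function `g - h` has a zero in the open
unit disk different from `1`. -/
theorem greedy_zero_in_disk_when_unstable
    (lam σ T r : ℝ) (hlam : 0 < lam) (hσ : 0 < σ) (hT : 0 < T)
    (hr0 : 0 < r) (hr1 : r < 1) (W : ℕ) (hW : 1 ≤ W)
    (B : ℝ) (hB : B = T + W * (r * T + (1 - r) * σ) / (2 * (1 - r)))
    (hunst : 1 < lam * B)
    (a b : ℂ → ℂ) (u : ℂ → ℂ)
    (ha : ∀ x : ℂ, a x = (1 - (r : ℂ)) * Complex.exp (-((lam : ℂ) * σ) * (1 - x)))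
    (hb : ∀ x : ℂ, b x = 1 - (r : ℂ) * Complex.exp (-((lam : ℂ) * T) * (1 - x)))
    (hu : ∀ x : ℂ, u x = b x / a x) :
    ∃ x : ℂ, ‖x‖ < 1 ∧ x ≠ 1
      ∧ Complex.exp (-((lam : ℂ) * T) * (1 - x)) * ∑ i ∈ Finset.range (W + 1), u x ^ i
          = ((W : ℂ) + 1) * x * u x ^ W :=
  greedy_zero_in_disk_when_unstable_general lam σ T r hlam hT hr1 W B hB hunst a b u ha hb hu
end

section
/- Assume λT < 1. Let z ∈ (0,1], set r = 1 − z^M, and assume 1 − λ(1−r)(T−σ) ≠ 0. Define τ = λ(rT+(1−r)σ)/(1−λT+λ(rT+(1−r)σ)). Then 1 − τ = z holds if and only if z satisfies the polynomial equation P(z) := λ(T−σ)·z^{M+1} − z + (1−λT) = 0. In particular, if (1−τ)^M = 1−r and z = (1−r)^{1/M}, then P(z) = 0. -/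
/-!
Since `r = 1 - z ^ M`, the denominator of `τ` is `D = 1 - λ(T - σ) z ^ M`, and `1 - τ = (1 - λT) / D`;
clearing `D` turns `1 - τ = z` into `P(z) = 0`. Writing `D = (1 - z ^ M) + z ^ M (1 - λT) + λσ z ^ M`
shows `D > 0`, so `1 - τ ≥ 0` and `(1 - τ) ^ M = z ^ M` already forces `1 - τ = z`.
-/

lemma div_one_sub_mul_pow_eq_iff {a c z : ℝ} (M : ℕ) (h : 1 - c * z ^ M ≠ 0) :
    a / (1 - c * z ^ M) = z ↔ c * z ^ (M + 1) - z + a = 0 := by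
  rw [div_eq_iff h]
  constructor <;> intro h' <;> linear_combination h'

lemma one_sub_mul_sub_mul_pos {lam σ T w : ℝ} (hlam : 0 ≤ lam) (hσ : 0 ≤ σ) (hlamT : lam * T < 1)
    (hw₀ : 0 ≤ w) (hw₁ : w ≤ 1) : 0 < 1 - lam * (T - σ) * w := by
  have hconvex : 0 < (1 - w) + w * (1 - lam * T) := by
    rcases hw₀.eq_or_lt with rfl | hw
    · norm_num
    · nlinarith [mul_pos hw (sub_pos.mpr hlamT)]
  nlinarith [mul_nonneg (mul_nonneg hlam hσ) hw₀]

theorem greedy_fixed_point_polynomial_general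
    (lam σ T : ℝ) (hlam : 0 < lam) (hσ : 0 < σ)
    (M : ℕ) (hM : 1 ≤ M)
    (hlamT : lam * T < 1)
    (z : ℝ) (hz : z ∈ Set.Ioc (0 : ℝ) 1)
    (r : ℝ) (hr : r = 1 - z ^ M)
    (τ : ℝ)
    (hτ : τ = lam * (r * T + (1 - r) * σ) / (1 - lam * T + lam * (r * T + (1 - r) * σ))) :
    (1 - τ = z ↔ lam * (T - σ) * z ^ (M + 1) - z + (1 - lam * T) = 0)
      ∧ ((1 - τ) ^ M = 1 - r → z = (1 - r) ^ ((1 : ℝ) / M) →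
          lam * (T - σ) * z ^ (M + 1) - z + (1 - lam * T) = 0) := by
  obtain ⟨hz₀, hz₁⟩ := hz
  have hD : 1 - lam * T + lam * (r * T + (1 - r) * σ) = 1 - lam * (T - σ) * z ^ M := by
    rw [hr]; ring
  have hDpos : 0 < 1 - lam * (T - σ) * z ^ M :=
    one_sub_mul_sub_mul_pos hlam.le hσ.le hlamT (pow_nonneg hz₀.le M) (pow_le_one₀ hz₀.le hz₁)
  have h1τ : 1 - τ = (1 - lam * T) / (1 - lam * (T - σ) * z ^ M) := by
    rw [hτ, one_sub_div (hD ▸ hDpos.ne'), add_sub_cancel_right, hD]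
  have hiff : 1 - τ = z ↔ lam * (T - σ) * z ^ (M + 1) - z + (1 - lam * T) = 0 :=
    h1τ ▸ div_one_sub_mul_pow_eq_iff M hDpos.ne'
  refine ⟨hiff, fun hpow _ => hiff.mp ?_⟩
  have h1τ_nonneg : 0 ≤ 1 - τ := h1τ ▸ div_nonneg (sub_pos.mpr hlamT).le hDpos.le
  rw [hr, sub_sub_cancel] at hpow
  exact (pow_left_inj₀ h1τ_nonneg hz₀.le (by omega)).mp hpow

/-- The fixed-point equation `1 - τ = z` for the greedy network is
equivalent to the polynomial equation `P(z) = λ(T-σ)z^{M+1} - z + (1-λT) = 0`. -/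
theorem greedy_fixed_point_polynomial
    (lam σ T : ℝ) (hlam : 0 < lam) (hσ : 0 < σ) (hT : 0 < T)
    (M : ℕ) (hM : 1 ≤ M)
    (hlamT : lam * T < 1)
    (z : ℝ) (hz : z ∈ Set.Ioc (0 : ℝ) 1)
    (r : ℝ) (hr : r = 1 - z ^ M)
    (hden : 1 - lam * (1 - r) * (T - σ) ≠ 0)
    (τ : ℝ)
    (hτ : τ = lam * (r * T + (1 - r) * σ) / (1 - lam * T + lam * (r * T + (1 - r) * σ))) :
    (1 - τ = z ↔ lam * (T - σ) * z ^ (M + 1) - z + (1 - lam * T) = 0)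
      ∧ ((1 - τ) ^ M = 1 - r → z = (1 - r) ^ ((1 : ℝ) / M) →
          lam * (T - σ) * z ^ (M + 1) - z + (1 - lam * T) = 0) :=
  greedy_fixed_point_polynomial_general lam σ T hlam hσ M hM hlamT z hz r hr τ hτ
end

section
/- Assume λT < 1 and M ≥ 1. Then the polynomial P(z) = λ(T−σ)·z^{M+1} − z + (1−λT) has exactly one root z in the real interval [0,1]; moreover this root lies in (0,1). -/
open Set

/-!
On `[0, 1]` the polynomial `P(y) = a y ^ n - y + c`, with `a = λ(T - σ)` and `c = 1 - λT`,
satisfies `P 0 = c > 0` and `P 1 = -λσ < 0`, so it has a root in `(0, 1)`. According to the sign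
of `a`, `P` is convex or concave on `[0, ∞)`. A convex function that is negative at the right end
of an interval vanishes at most once there, and so does a concave function that is positive at
the left end; hence the root is unique.
-/

section LevelSet

variable {𝕜 β : Type*} [Field 𝕜] [LinearOrder 𝕜] [IsStrictOrderedRing 𝕜]
  [AddCommMonoid β] [LinearOrder β] [IsOrderedCancelAddMonoid β] [Module 𝕜 β]
  [PosSMulStrictMono 𝕜 β] {s : Set 𝕜} {f : 𝕜 → β} {b : 𝕜} {c : β}

theorem ConvexOn.subsingleton_inter_Iic_preimage_of_lt (hf : ConvexOn 𝕜 s f) (hb : b ∈ s)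
    (hfb : f b < c) : (s ∩ Iic b ∩ f ⁻¹' {c}).Subsingleton := by
  intro x hx y hy
  by_contra hne
  wlog hxy : x < y generalizing x y
  · exact this hy hx (Ne.symm hne) ((Ne.lt_or_gt hne).resolve_left hxy)
  obtain ⟨⟨hxs, -⟩, hfx⟩ := hx
  obtain ⟨⟨-, hyb⟩, hfy⟩ := hy
  have := hf.le_right_of_left_le'' hxs hb hxy hyb (hfx.trans hfy.symm).le
  exact (hfy ▸ this).not_gt hfb

theorem ConcaveOn.subsingleton_inter_Ici_preimage_of_lt (hf : ConcaveOn 𝕜 s f) (hb : b ∈ s)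
    (hfb : c < f b) : (s ∩ Ici b ∩ f ⁻¹' {c}).Subsingleton := by
  intro x hx y hy
  by_contra hne
  wlog hxy : x < y generalizing x y
  · exact this hy hx (Ne.symm hne) ((Ne.lt_or_gt hne).resolve_left hxy)
  obtain ⟨⟨-, hbx⟩, hfx⟩ := hx
  obtain ⟨⟨hys, -⟩, hfy⟩ := hy
  have := hf.left_le_of_le_right'' hb hys hbx hxy (hfx.trans hfy.symm).le
  exact (hfx ▸ this).not_gt hfb

end LevelSet

section Polynomial

variable {a : ℝ}

theorem convexOn_mul_pow_sub_add (ha : 0 ≤ a) (n : ℕ) (c : ℝ) :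
    ConvexOn ℝ (Ici 0) fun y : ℝ ↦ a * y ^ n - y + c :=
  (((convexOn_pow n).smul ha).sub (concaveOn_id (convex_Ici 0))).add_const c

theorem concaveOn_mul_pow_sub_add (ha : a ≤ 0) (n : ℕ) (c : ℝ) :
    ConcaveOn ℝ (Ici 0) fun y : ℝ ↦ a * y ^ n - y + c := by
  refine ((((convexOn_pow n).smul (neg_nonneg.2 ha)).add
    (convexOn_id (convex_Ici 0))).neg.add_const c).congr fun y _ ↦ ?_
  simp only [Pi.add_apply, Pi.neg_apply, id, smul_eq_mul]
  ring

theorem subsingleton_zeros_mul_pow_sub_add {n : ℕ} {c : ℝ} (hn : n ≠ 0) (hc : 0 < c)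
    (h1 : a - 1 + c < 0) :
    {y ∈ Icc (0 : ℝ) 1 | a * y ^ n - y + c = 0}.Subsingleton := by
  rcases le_total 0 a with ha | ha
  · refine ((convexOn_mul_pow_sub_add ha n c).subsingleton_inter_Iic_preimage_of_lt
      (b := 1) (mem_Ici.2 zero_le_one) (c := 0) (by simpa using h1)).anti ?_
    exact fun y ⟨⟨hy0, hy1⟩, hy⟩ ↦ ⟨⟨hy0, hy1⟩, hy⟩
  · refine ((concaveOn_mul_pow_sub_add ha n c).subsingleton_inter_Ici_preimage_of_lt
      (b := 0) self_mem_Ici (c := 0) (by simpa [hn] using hc)).anti ?_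
    exact fun y ⟨⟨hy0, _⟩, hy⟩ ↦ ⟨⟨hy0, hy0⟩, hy⟩

theorem exists_zero_mul_pow_sub_add_mem_Ioo {n : ℕ} {c : ℝ} (hn : n ≠ 0) (hc : 0 < c)
    (h1 : a - 1 + c < 0) :
    ∃ z ∈ Ioo (0 : ℝ) 1, a * z ^ n - z + c = 0 := by
  have hcont : ContinuousOn (fun y : ℝ ↦ a * y ^ n - y + c) (Icc 0 1) := by fun_prop
  exact intermediate_value_Ioo' zero_le_one hcont ⟨by simpa using h1, by simpa [hn] using hc⟩

end Polynomial

theorem greedy_polynomial_unique_root_general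
    (lam σ T : ℝ) (hlam : 0 < lam) (hσ : 0 < σ)
    (M : ℕ)
    (hlamT : lam * T < 1) :
    ∃ z : ℝ, z ∈ Set.Ioo (0 : ℝ) 1
      ∧ lam * (T - σ) * z ^ (M + 1) - z + (1 - lam * T) = 0
      ∧ ∀ y ∈ Set.Icc (0 : ℝ) 1,
          lam * (T - σ) * y ^ (M + 1) - y + (1 - lam * T) = 0 → y = z := by
  have hc : 0 < 1 - lam * T := sub_pos.2 hlamT
  have h1 : lam * (T - σ) - 1 + (1 - lam * T) < 0 := by
    linarith [mul_pos hlam hσ]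
  obtain ⟨z, hz, hPz⟩ := exists_zero_mul_pow_sub_add_mem_Ioo M.succ_ne_zero hc h1
  exact ⟨z, hz, hPz, fun y hy hPy ↦ subsingleton_zeros_mul_pow_sub_add M.succ_ne_zero hc h1
    ⟨hy, hPy⟩ ⟨Ioo_subset_Icc_self hz, hPz⟩⟩

/-- Under `λT < 1`, the polynomial
`P(z) = λ(T-σ)z^{M+1} - z + (1-λT)` has exactly one root in `[0,1]`, and this
root lies in the open interval `(0,1)`. -/
theorem greedy_polynomial_unique_root
    (lam σ T : ℝ) (hlam : 0 < lam) (hσ : 0 < σ) (hT : 0 < T)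
    (M : ℕ) (hM : 1 ≤ M)
    (hlamT : lam * T < 1) :
    ∃ z : ℝ, z ∈ Set.Ioo (0 : ℝ) 1
      ∧ lam * (T - σ) * z ^ (M + 1) - z + (1 - lam * T) = 0
      ∧ ∀ y ∈ Set.Icc (0 : ℝ) 1,
          lam * (T - σ) * y ^ (M + 1) - y + (1 - lam * T) = 0 → y = z :=
  greedy_polynomial_unique_root_general lam σ T hlam hσ M hlamT
end

section
/- Let z ∈ (0,1] satisfy λ(T−σ)·z^{M+1} − z + (1−λT) = 0, and set r = 1 − z^M and B = T + W·(rT+(1−r)σ)/(2(1−r)). Then 1 − λB = (1−λT)·(1 − W(1−z)/(2z^{M+1})). Consequently (since λT<1), λB < 1 holds if and only if 2z^{M+1} > W(1−z). -/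
/-!
Since `1 - r = z ^ M`, the root equation says exactly that
`λ (r T + (1 - r) σ) z = (1 - λT)(1 - z)`; dividing by `2 z ^ (M + 1)` turns the queueing term
`λ W (r T + (1 - r) σ) / (2 (1 - r))` of `λB` into `(1 - λT) W (1 - z) / (2 z ^ (M + 1))`.
The criterion follows because `1 - λT > 0`.
-/

theorem mul_weighted_service_mul_eq_of_root {lam σ T z r : ℝ} {M : ℕ}
    (hroot : lam * (T - σ) * z ^ (M + 1) - z + (1 - lam * T) = 0) (hr : r = 1 - z ^ M) :
    lam * (r * T + (1 - r) * σ) * z = (1 - lam * T) * (1 - z) := by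
  subst hr
  linear_combination -hroot

theorem one_sub_mul_load_eq_of_root {lam σ T z r : ℝ} {M : ℕ} (W : ℝ) (hz : z ≠ 0)
    (hroot : lam * (T - σ) * z ^ (M + 1) - z + (1 - lam * T) = 0) (hr : r = 1 - z ^ M) :
    1 - lam * (T + W * (r * T + (1 - r) * σ) / (2 * (1 - r)))
      = (1 - lam * T) * (1 - W * (1 - z) / (2 * z ^ (M + 1))) := by
  have hservice := mul_weighted_service_mul_eq_of_root hroot hr
  have hzM : z ^ M ≠ 0 := pow_ne_zero M hz
  rw [show 1 - r = z ^ M by rw [hr]; ring] at hservice ⊢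
  field_simp
  linear_combination (-(W * z ^ M) : ℝ) * hservice

theorem greedy_network_ergodicity_criterion_general
    (lam σ T : ℝ)
    (W M : ℕ)
    (hlamT : lam * T < 1)
    (z : ℝ) (hz : z ∈ Set.Ioc (0 : ℝ) 1)
    (hroot : lam * (T - σ) * z ^ (M + 1) - z + (1 - lam * T) = 0)
    (r B : ℝ) (hr : r = 1 - z ^ M)
    (hB : B = T + W * (r * T + (1 - r) * σ) / (2 * (1 - r))) :
    1 - lam * B = (1 - lam * T) * (1 - W * (1 - z) / (2 * z ^ (M + 1)))
      ∧ (lam * B < 1 ↔ W * (1 - z) < 2 * z ^ (M + 1)) := by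
  have hz0 : 0 < z := hz.1
  have hfactor : 1 - lam * B = (1 - lam * T) * (1 - W * (1 - z) / (2 * z ^ (M + 1))) := by
    rw [hB]
    exact one_sub_mul_load_eq_of_root W hz0.ne' hroot hr
  refine ⟨hfactor, ?_⟩
  rw [← sub_pos, hfactor, mul_pos_iff_of_pos_left (sub_pos.2 hlamT), sub_pos,
    div_lt_one (by positivity)]

/-- For a root `z` of the fixed-point polynomial, the ergodicity
quantity factorizes as `1 - λB = (1-λT)(1 - W(1-z)/(2z^{M+1}))`, so that
`λB < 1` iff `2z^{M+1} > W(1-z)`. -/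
theorem greedy_network_ergodicity_criterion
    (lam σ T : ℝ) (hlam : 0 < lam) (hσ : 0 < σ) (hT : 0 < T)
    (W M : ℕ) (hW : 1 ≤ W) (hM : 1 ≤ M)
    (hlamT : lam * T < 1)
    (z : ℝ) (hz : z ∈ Set.Ioc (0 : ℝ) 1)
    (hroot : lam * (T - σ) * z ^ (M + 1) - z + (1 - lam * T) = 0)
    (r B : ℝ) (hr : r = 1 - z ^ M)
    (hB : B = T + W * (r * T + (1 - r) * σ) / (2 * (1 - r))) :
    1 - lam * B = (1 - lam * T) * (1 - W * (1 - z) / (2 * z ^ (M + 1)))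
      ∧ (lam * B < 1 ↔ W * (1 - z) < 2 * z ^ (M + 1)) :=
  greedy_network_ergodicity_criterion_general lam σ T W M hlamT z hz hroot r B hr hB
end

section
/- Let u ∈ (0,1) satisfy 2u^{M+1} = W(1−u), and assume 0 < σ < T. Then both denominators T + W(σ−T)(1−u)/2 = T(1−u^{M+1}) + σ·u^{M+1} and T + Wσ(1−u)/(u(2+W)−W) are positive, and the strict inequality (1−u)/( T + Wσ(1−u)/(u(2+W)−W) ) < (1−u)/( T + W(σ−T)(1−u)/2 ) holds; that is, the maximum throughput of the fair model is strictly smaller than that of the greedy model. -/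
/-!
Write `a = u ^ (M + 1)`. The defining equation `2a = W(1 - u)` turns the greedy denominator into
the convex combination `T(1 - a) + σa`, which lies strictly between `σ > 0` and `T`, and the fair
denominator into `T + σa / (u - a)`, which exceeds `T` because `a < u` once `M ≥ 1`. Hence the
greedy denominator is the smaller one.
-/

lemma greedy_denominator_eq {W u a σ T : ℝ} (h : 2 * a = W * (1 - u)) :
    T + W * (σ - T) * (1 - u) / 2 = T * (1 - a) + σ * a := by
  linear_combination (T - σ) / 2 * h

lemma fair_denominator_eq {W u a : ℝ} (h : 2 * a = W * (1 - u)) :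
    u * (2 + W) - W = 2 * (u - a) := by
  linear_combination h

lemma fair_correction_eq {W u a σ : ℝ} (h : 2 * a = W * (1 - u)) (hau : a < u) :
    W * σ * (1 - u) / (u * (2 + W) - W) = σ * a / (u - a) := by
  have hua : u - a ≠ 0 := sub_ne_zero.mpr hau.ne'
  rw [fair_denominator_eq h]
  field_simp
  linear_combination -σ * h

lemma convex_combination_mem_Ioo {a σ T : ℝ} (ha : a ∈ Set.Ioo (0 : ℝ) 1) (hσT : σ < T) :
    T * (1 - a) + σ * a ∈ Set.Ioo σ T := by
  obtain ⟨ha0, ha1⟩ := ha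
  constructor <;> nlinarith

theorem fair_max_throughput_lt_greedy_general
    (σ T : ℝ) (hσ : 0 < σ) (hσT : σ < T)
    (W M : ℕ) (hM : 1 ≤ M)
    (u : ℝ) (hu : u ∈ Set.Ioo (0 : ℝ) 1)
    (hsat : 2 * u ^ (M + 1) = W * (1 - u)) :
    T + W * (σ - T) * (1 - u) / 2 = T * (1 - u ^ (M + 1)) + σ * u ^ (M + 1)
      ∧ 0 < T + W * (σ - T) * (1 - u) / 2
      ∧ 0 < T + W * σ * (1 - u) / (u * (2 + W) - W)
      ∧ (1 - u) / (T + W * σ * (1 - u) / (u * (2 + W) - W))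
          < (1 - u) / (T + W * (σ - T) * (1 - u) / 2) := by
  obtain ⟨hu0, hu1⟩ := hu
  set a := u ^ (M + 1)
  have hau : a < u := pow_lt_self_of_lt_one₀ hu0 hu1 (by omega)
  have ha : a ∈ Set.Ioo (0 : ℝ) 1 := ⟨pow_pos hu0 _, hau.trans hu1⟩
  obtain ⟨hσ_lt_greedy, hgreedy_lt_T⟩ := convex_combination_mem_Ioo ha hσT
  have hgreedy_pos : 0 < T * (1 - a) + σ * a := hσ.trans hσ_lt_greedy
  have hcorrection_pos : 0 < σ * a / (u - a) := div_pos (mul_pos hσ ha.1) (sub_pos.mpr hau)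
  rw [greedy_denominator_eq hsat, fair_correction_eq hsat hau]
  exact ⟨rfl, hgreedy_pos, by linarith,
    div_lt_div_of_pos_left (sub_pos.mpr hu1) hgreedy_pos (by linarith)⟩

/-- The maximum throughput of the fair model is strictly smaller
than that of the greedy model. -/
theorem fair_max_throughput_lt_greedy
    (σ T : ℝ) (hσ : 0 < σ) (hσT : σ < T)
    (W M : ℕ) (hW : 1 ≤ W) (hM : 1 ≤ M)
    (u : ℝ) (hu : u ∈ Set.Ioo (0 : ℝ) 1)
    (hsat : 2 * u ^ (M + 1) = W * (1 - u)) :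
    T + W * (σ - T) * (1 - u) / 2 = T * (1 - u ^ (M + 1)) + σ * u ^ (M + 1)
      ∧ 0 < T + W * (σ - T) * (1 - u) / 2
      ∧ 0 < T + W * σ * (1 - u) / (u * (2 + W) - W)
      ∧ (1 - u) / (T + W * σ * (1 - u) / (u * (2 + W) - W))
          < (1 - u) / (T + W * (σ - T) * (1 - u) / 2) :=
  fair_max_throughput_lt_greedy_general σ T hσ hσT W M hM u hu hsat
end

section
/- Fix a real s > 0 and set f = (1−r)·exp(−sσ)/(1 − r·exp(−sT)) and v = exp(−sT)·(∑_{i=0}^{W} f^i)/(W+1). Let φ : {0,1,…,W} × ℕ → ℝ satisfy: φ(0,0)=1; for all 1≤k≤W and all n≥0, φ(k,n) = (1−r)·exp(−sσ)·φ(k−1,n) + r·exp(−sT)·φ(k,n); and for all n≥1, φ(0,n) = (exp(−sT)/(W+1))·∑_{ℓ=0}^{W} φ(ℓ,n−1). Then φ(k,n) = f^k · v^n for all 0≤k≤W and n≥0. Consequently, for any summable nonnegative family p(k,n) (0≤k≤W, n≥0), the Laplace transform ψ*(s) = ∑_{k=0}^{W} ∑_{n≥0} p(k,n)·φ(k,n)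 of the stationary virtual waiting time equals ∑_{k=0}^{W} f^k · F_k(v), where F_k(x) = ∑_{n≥0} p(k,n)·x^n. -/
/-!
Solving the backoff recursion for `φ (k, n)` gives `φ (k, n) = f * φ (k - 1, n)`, so
`φ (k, n) = f ^ k * φ (0, n)`. Substituted into the queue recursion, this makes
`φ (0, ·)` geometric with ratio `v`; the transform identity is then termwise.
-/

open Finset

theorem one_sub_mul_pos_of_lt_one {r e : ℝ} (hr : r < 1) (he0 : 0 < e) (he1 : e ≤ 1) :
    0 < 1 - r * e := by
  nlinarith

theorem eq_div_one_sub_mul_of_eq_mul_add {K : Type*} [Field K] {x y a b : K}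
    (h : x = a * y + b * x) (hb : 1 - b ≠ 0) : x = a / (1 - b) * y := by
  field_simp
  linear_combination h

theorem eq_pow_mul_of_succ_eq_mul {M : Type*} [Monoid M] {W : ℕ} {g : ℕ → M} {f : M}
    (h : ∀ k < W, g (k + 1) = f * g k) : ∀ k ≤ W, g k = f ^ k * g 0 := by
  intro k hk
  induction k with
  | zero => simp
  | succ k ih => rw [h k hk, ih (by omega), pow_succ', mul_assoc]

theorem eq_pow_of_row_geometric {R : Type*} [CommSemiring R] {W : ℕ} {f c : R}
    {φ : ℕ × ℕ → R} (h00 : φ (0, 0) = 1)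
    (hrow : ∀ k ≤ W, ∀ n, φ (k, n) = f ^ k * φ (0, n))
    (hcol : ∀ n, φ (0, n + 1) = c * ∑ l ∈ range (W + 1), φ (l, n)) :
    ∀ n, φ (0, n) = (c * ∑ i ∈ range (W + 1), f ^ i) ^ n := by
  intro n
  induction n with
  | zero => simpa using h00
  | succ n ih =>
    have hsum : ∑ l ∈ range (W + 1), φ (l, n) = (∑ i ∈ range (W + 1), f ^ i) * φ (0, n) := by
      rw [sum_mul]
      exact sum_congr rfl fun l hl => hrow l (Nat.lt_succ_iff.mp (mem_range.mp hl)) n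
    rw [hcol, hsum, ih, pow_succ]
    ring

theorem greedy_waiting_time_transform_general
    (σ T r : ℝ) (hT : 0 < T)
    (hr1 : r < 1) (W : ℕ)
    (s : ℝ) (hs : 0 < s)
    (f v : ℝ)
    (hf : f = (1 - r) * Real.exp (-(s * σ)) / (1 - r * Real.exp (-(s * T))))
    (hv : v = Real.exp (-(s * T)) * (∑ i ∈ Finset.range (W + 1), f ^ i) / ((W : ℝ) + 1))
    (φ : ℕ × ℕ → ℝ)
    (hφ00 : φ (0, 0) = 1)
    (hφk : ∀ k : ℕ, 1 ≤ k → k ≤ W → ∀ n : ℕ,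
      φ (k, n) = (1 - r) * Real.exp (-(s * σ)) * φ (k - 1, n)
        + r * Real.exp (-(s * T)) * φ (k, n))
    (hφ0 : ∀ n : ℕ, 1 ≤ n →
      φ (0, n) = Real.exp (-(s * T)) / ((W : ℝ) + 1)
        * ∑ l ∈ Finset.range (W + 1), φ (l, n - 1)) :
    (∀ k : ℕ, k ≤ W → ∀ n : ℕ, φ (k, n) = f ^ k * v ^ n)
      ∧ ∀ p : ℕ × ℕ → ℝ, (∀ k n : ℕ, 0 ≤ p (k, n)) → Summable p →
          ∑ k ∈ Finset.range (W + 1), ∑' n : ℕ, p (k, n) * φ (k, n)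
            = ∑ k ∈ Finset.range (W + 1), f ^ k * ∑' n : ℕ, p (k, n) * v ^ n := by
  have hden : 1 - r * Real.exp (-(s * T)) ≠ 0 :=
    (one_sub_mul_pos_of_lt_one hr1 (Real.exp_pos _)
      (Real.exp_le_one_iff.mpr (by nlinarith))).ne'
  have hrow : ∀ k ≤ W, ∀ n, φ (k, n) = f ^ k * φ (0, n) := fun k hk n =>
    eq_pow_mul_of_succ_eq_mul (g := fun k => φ (k, n)) (fun k hk => by
      rw [hf]
      exact eq_div_one_sub_mul_of_eq_mul_add (hφk (k + 1) (by omega) hk n) hden) k hk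
  have hcol : ∀ n, φ (0, n) = v ^ n := by
    rw [hv, mul_div_right_comm]
    exact eq_pow_of_row_geometric hφ00 hrow fun n => by simpa using hφ0 (n + 1) n.succ_pos
  have hφ : ∀ k ≤ W, ∀ n, φ (k, n) = f ^ k * v ^ n := fun k hk n => by
    rw [hrow k hk, hcol]
  refine ⟨hφ, fun p _ _ => sum_congr rfl fun k hk => ?_⟩
  rw [← tsum_mul_left]
  refine tsum_congr fun n => ?_
  rw [hφ k (Nat.lt_succ_iff.mp (mem_range.mp hk))]
  ring

/-- The conditional waiting-time Laplace transforms of the greedy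
model satisfy `φ(k,n) = f^k·v^n`, and consequently the Laplace transform of the
stationary virtual waiting time is `ψ*(s) = ∑_{k=0}^{W} f^k·F_k(v)`. -/
theorem greedy_waiting_time_transform
    (σ T r : ℝ) (hσ : 0 < σ) (hT : 0 < T)
    (hr0 : 0 < r) (hr1 : r < 1) (W : ℕ) (hW : 1 ≤ W)
    (s : ℝ) (hs : 0 < s)
    (f v : ℝ)
    (hf : f = (1 - r) * Real.exp (-(s * σ)) / (1 - r * Real.exp (-(s * T))))
    (hv : v = Real.exp (-(s * T)) * (∑ i ∈ Finset.range (W + 1), f ^ i) / ((W : ℝ) + 1))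
    (φ : ℕ × ℕ → ℝ)
    (hφ00 : φ (0, 0) = 1)
    (hφk : ∀ k : ℕ, 1 ≤ k → k ≤ W → ∀ n : ℕ,
      φ (k, n) = (1 - r) * Real.exp (-(s * σ)) * φ (k - 1, n)
        + r * Real.exp (-(s * T)) * φ (k, n))
    (hφ0 : ∀ n : ℕ, 1 ≤ n →
      φ (0, n) = Real.exp (-(s * T)) / ((W : ℝ) + 1)
        * ∑ l ∈ Finset.range (W + 1), φ (l, n - 1)) :
    (∀ k : ℕ, k ≤ W → ∀ n : ℕ, φ (k, n) = f ^ k * v ^ n)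
      ∧ ∀ p : ℕ × ℕ → ℝ, (∀ k n : ℕ, 0 ≤ p (k, n)) → Summable p →
          ∑ k ∈ Finset.range (W + 1), ∑' n : ℕ, p (k, n) * φ (k, n)
            = ∑ k ∈ Finset.range (W + 1), f ^ k * ∑' n : ℕ, p (k, n) * v ^ n :=
  greedy_waiting_time_transform_general σ T r hT hr1 W s hs f v hf hv φ hφ00 hφk hφ0
end
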